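/- For every pointed model ⟨M,w⟩: ■(p∧q) is exactly true (true and non-false) at w iff ■p ∧ ■q is exactly true at w. -/

import Mathlib

/-- Formulas of the language with ¬, ∧, ∨, □, ■, 𝐈 and ▲. -/
inductive Form : Type
  | var : ℕ → Form
  | neg : Form → Form
  | conj : Form → Form → Form
  | disj : Form → Form → Form
  | box : Form → Form
  | bbox : Form → Form
  | ign : Form → Form
  | tri : Form → Form

/-- A Kripke model for Belnap–Dunn modal logic. -/
structure Model (W : Type) where
  R : W → W → Prop
  vp : ℕ → W → Prop
  vn : ℕ → W → Prop

mutual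
  /-- support of truth -/
  def tr {W : Type} (M : Model W) : Form → W → Prop
    | .var n, w => M.vp n w
    | .neg φ, w => fa M φ w
    | .conj φ ψ, w => tr M φ w ∧ tr M ψ w
    | .disj φ ψ, w => tr M φ w ∨ tr M ψ w
    | .box φ, w => ∀ w', M.R w w' → tr M φ w'
    | .bbox φ, w => (∀ w', M.R w w' → tr M φ w') ∧
        ∀ w₁ w₂, M.R w w₁ → M.R w w₂ → fa M φ w₁ → fa M φ w₂
    | .ign φ, w => tr M φ w ∧ (∀ w', M.R w w' → w' ≠ w → fa M φ w') ∧
        ∀ w₁ w₂, M.R w w₁ → w₁ ≠ w → M.R w w₂ → w₂ ≠ w → tr M φ w₁ → tr M φ w₂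
    | .tri φ, w => (∀ w₁ w₂, M.R w w₁ → M.R w w₂ →
          (tr M φ w₁ → tr M φ w₂) ∧ (fa M φ w₁ → fa M φ w₂)) ∧
        ∀ w', M.R w w' → tr M φ w' ∨ fa M φ w'
  /-- support of falsity -/
  def fa {W : Type} (M : Model W) : Form → W → Prop
    | .var n, w => M.vn n w
    | .neg φ, w => tr M φ w
    | .conj φ ψ, w => fa M φ w ∨ fa M ψ w
    | .disj φ ψ, w => fa M φ w ∧ fa M ψ w
    | .box φ, w => ∃ w', M.R w w' ∧ fa M φ w'
    | .bbox φ, w => (∃ w', M.R w w' ∧ fa M φ w') ∨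
        ∃ w₁ w₂, M.R w w₁ ∧ M.R w w₂ ∧ tr M φ w₁ ∧ ¬ tr M φ w₂
    | .ign φ, w => fa M φ w ∨ (∃ w', M.R w w' ∧ w' ≠ w ∧ tr M φ w') ∨
        ∃ w₁ w₂, (M.R w w₁ ∧ w₁ ≠ w) ∧ (M.R w w₂ ∧ w₂ ≠ w) ∧ ¬ fa M φ w₁ ∧ fa M φ w₂
    | .tri φ, w => (∃ w₁ w₂, M.R w w₁ ∧ M.R w w₂ ∧ tr M φ w₁ ∧ ¬ tr M φ w₂) ∨
        (∃ w₁ w₂, M.R w w₁ ∧ M.R w w₂ ∧ fa M φ w₁ ∧ ¬ fa M φ w₂) ∨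
        (∃ w₁ w₂, M.R w w₁ ∧ M.R w w₂ ∧ tr M φ w₁ ∧ fa M φ w₂)
end

/-- φ contains an occurrence of □ -/
def hasBox : Form → Prop
  | .var _ => False
  | .neg φ => hasBox φ
  | .conj φ ψ => hasBox φ ∨ hasBox ψ
  | .disj φ ψ => hasBox φ ∨ hasBox ψ
  | .box _ => True
  | .bbox φ => hasBox φ
  | .ign φ => hasBox φ
  | .tri φ => hasBox φ

/-- φ contains an occurrence of ■ -/
def hasBBox : Form → Prop
  | .var _ => False
  | .neg φ => hasBBox φ
  | .conj φ ψ => hasBBox φ ∨ hasBBox ψ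
  | .disj φ ψ => hasBBox φ ∨ hasBBox ψ
  | .box φ => hasBBox φ
  | .bbox _ => True
  | .ign φ => hasBBox φ
  | .tri φ => hasBBox φ

/-- φ contains an occurrence of 𝐈 -/
def hasIgn : Form → Prop
  | .var _ => False
  | .neg φ => hasIgn φ
  | .conj φ ψ => hasIgn φ ∨ hasIgn ψ
  | .disj φ ψ => hasIgn φ ∨ hasIgn ψ
  | .box φ => hasIgn φ
  | .bbox φ => hasIgn φ
  | .ign _ => True
  | .tri φ => hasIgn φ

/-- φ contains an occurrence of ▲ -/
def hasTri : Form → Prop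
  | .var _ => False
  | .neg φ => hasTri φ
  | .conj φ ψ => hasTri φ ∨ hasTri ψ
  | .disj φ ψ => hasTri φ ∨ hasTri ψ
  | .box φ => hasTri φ
  | .bbox φ => hasTri φ
  | .ign φ => hasTri φ
  | .tri _ => True

/-- validity of the sequent φ ⊢ χ on the frame (W,R) -/
def validOn {W : Type} (R : W → W → Prop) (φ χ : Form) : Prop :=
  ∀ (vp vn : ℕ → W → Prop) (w : W), tr ⟨R, vp, vn⟩ φ w → tr ⟨R, vp, vn⟩ χ w

/-- ♦φ := ¬■¬φ -/
def dia (φ : Form) : Form := .neg (.bbox (.neg φ))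

/-!
Once every successor makes φ true and none makes it false, both agreement clauses of ■φ hold
vacuously; so ■φ is exactly true at w iff φ is exactly true at every successor of w. Exact truth
of a conjunction is exact truth of both conjuncts, hence both sides of the equivalence say that
p and q are exactly true at every successor of w.
-/

def ExactlyTrue {W : Type} (M : Model W) (φ : Form) (w : W) : Prop :=
  tr M φ w ∧ ¬ fa M φ w

section ExactlyTrue

variable {W : Type} (M : Model W) (φ ψ : Form) (w : W)

theorem exactlyTrue_conj :
    ExactlyTrue M (.conj φ ψ) w ↔ ExactlyTrue M φ w ∧ ExactlyTrue M ψ w := by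
  simp only [ExactlyTrue, tr, fa, not_or]
  exact and_and_and_comm

theorem exactlyTrue_bbox :
    ExactlyTrue M (.bbox φ) w ↔ ∀ w', M.R w w' → ExactlyTrue M φ w' := by
  simp only [ExactlyTrue, tr, fa, not_or, not_exists, not_and, not_not]
  constructor
  · rintro ⟨⟨htr, -⟩, hnfa, -⟩ w' hw'
    exact ⟨htr w' hw', hnfa w' hw'⟩
  · intro h
    exact ⟨⟨fun w' hw' => (h w' hw').1, fun w₁ _ hw₁ _ hfa => absurd hfa (h w₁ hw₁).2⟩,
      fun w' hw' => (h w' hw').2, fun _ w₂ _ hw₂ _ => (h w₂ hw₂).1⟩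

end ExactlyTrue

/-- ■(p∧q) is exactly true at w iff ■p ∧ ■q is exactly true at w. -/
theorem bbox_conj_exactly_true {W : Type} (M : Model W) (w : W) :
    (tr M (.bbox (.conj (.var 0) (.var 1))) w ∧
     ¬ fa M (.bbox (.conj (.var 0) (.var 1))) w) ↔
    (tr M (.conj (.bbox (.var 0)) (.bbox (.var 1))) w ∧
     ¬ fa M (.conj (.bbox (.var 0)) (.bbox (.var 1))) w) := by
  change ExactlyTrue M _ w ↔ ExactlyTrue M _ w
  rw [exactlyTrue_conj, exactlyTrue_bbox, exactlyTrue_bbox, exactlyTrue_bbox]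
  simp only [exactlyTrue_conj, imp_and, forall_and]
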